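/- arXiv:2602.14685 — 4 statements merged into one kernel-verified Lean document; each statement's English description precedes it below -/
import Mathlib

section
/- Let f₀ : ℝᵈ → ℝ be a nonnegative C¹ function with finite mass m = ∫ f₀(v) dv > 0 and momentum p = ∫ v f₀(v) dv, and set v̄ = p/m. Then the function f(t,v) = exp(γ m d t) · f₀(v̄ + exp(γ m t)(v − v̄)) satisfies the spatially homogeneous kinetic Cucker–Smale equation ∂ₜf = γ ∇ᵥ·(E₀[f] f), where E₀[f](t,v) = ∫ (v − v*) f(t,v*) dv*, with initial datum f(0,·) = f₀. -/
open MeasureTheory Real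

noncomputable section

/-- The explicit profile `f(t,v) = exp(γ m d t) f₀(v̄ + exp(γ m t)(v − v̄))` solves the
spatially homogeneous kinetic Cucker–Smale equation
`∂ₜ f = γ ∇ᵥ·(E₀[f] f)`, `E₀[f](t,v) = ∫ (v − v*) f(t,v*) dv*`, with `f(0,·) = f₀`. -/
theorem stmt0 (d : ℕ) (hd : 1 ≤ d) (γ : ℝ) (hγ : 0 < γ)
    (f₀ : EuclideanSpace ℝ (Fin d) → ℝ)
    (hf₀C1 : ContDiff ℝ 1 f₀) (hf₀nonneg : ∀ v, 0 ≤ f₀ v)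
    (hf₀int : Integrable f₀)
    (hf₀mom : Integrable (fun v => f₀ v • v))
    (m : ℝ) (hm : m = ∫ v, f₀ v) (hmpos : 0 < m)
    (p : EuclideanSpace ℝ (Fin d)) (hp : p = ∫ v, f₀ v • v)
    (vbar : EuclideanSpace ℝ (Fin d)) (hvbar : vbar = m⁻¹ • p)
    (f : ℝ → EuclideanSpace ℝ (Fin d) → ℝ)
    (hf : ∀ t v, f t v = exp (γ * m * (d : ℝ) * t) * f₀ (vbar + exp (γ * m * t) • (v - vbar))) :
    (∀ v, f 0 v = f₀ v) ∧
    (∀ t v, HasDerivAt (fun s => f s v)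
      (γ * ∑ i : Fin d,
        fderiv ℝ (fun w => (∫ w', (w i - w' i) * f t w') * f t w) v
          (EuclideanSpace.single i 1)) t) := by
  constructor
  · intro v
    rw [hf 0 v]
    simp
  · intro t v
    set c : ℝ := exp (γ * m * t) with hc
    have hcpos : 0 < c := exp_pos _
    -- substitution lemma
    have subst : ∀ F : EuclideanSpace ℝ (Fin d) → ℝ,
        ∫ x, F (vbar + c • (x - vbar)) = (c ^ d)⁻¹ * ∫ y, F y := by
      intro F
      have h1 : ∫ x, F (vbar + c • (x - vbar)) = ∫ x, F (vbar + c • x) :=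
        integral_sub_right_eq_self (fun x => F (vbar + c • x)) vbar
      have h2 : ∫ x, F (vbar + c • x)
          = |(c ^ Module.finrank ℝ (EuclideanSpace ℝ (Fin d)))⁻¹| • ∫ y, F (vbar + y) :=
        Measure.integral_comp_smul volume (fun y => F (vbar + y)) c
      have h3 : ∫ y, F (vbar + y) = ∫ y, F y :=
        integral_add_left_eq_self (fun y => F y) vbar
      rw [h1, h2, h3, finrank_euclideanSpace_fin, smul_eq_mul,
        abs_of_nonneg (by positivity)]

    -- basic facts
    have hcne : c ≠ 0 := ne_of_gt hcpos
    have hcd : (c:ℝ) ^ d ≠ 0 := pow_ne_zero _ hcne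
    have hmomi : ∀ i : Fin d, Integrable (fun y : EuclideanSpace ℝ (Fin d) => y i * f₀ y) := by
      intro i
      have h := (EuclideanSpace.proj (𝕜 := ℝ) i).integrable_comp hf₀mom
      simpa [PiLp.proj_apply, smul_eq_mul, mul_comm] using h
    have hpi : ∀ i : Fin d, p i = m * vbar i := by
      intro i
      have : p = m • vbar := by rw [hvbar, smul_inv_smul₀ (ne_of_gt hmpos)]
      rw [this]; simp [smul_eq_mul]
    have hmomval : ∀ i : Fin d, ∫ y, y i * f₀ y = m * vbar i := by
      intro i
      have h := (EuclideanSpace.proj (𝕜 := ℝ) i).integral_comp_comm hf₀mom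
      rw [← hpi i, hp]
      simpa [PiLp.proj_apply, smul_eq_mul, mul_comm] using h
    -- integrability of affine composition
    have hcompint : ∀ F : EuclideanSpace ℝ (Fin d) → ℝ, Integrable F →
        Integrable (fun w : EuclideanSpace ℝ (Fin d) => F (vbar + c • (w - vbar))) := by
      intro F hF
      exact (((hF.comp_add_left vbar).comp_smul hcne).comp_sub_right vbar)

    set C : ℝ := exp (γ * m * (d : ℝ) * t) with hC
    have hCd : C = c ^ d := by
      rw [hC, hc, ← Real.exp_nat_mul]
      ring_nf
    have hftint : Integrable (fun w' : EuclideanSpace ℝ (Fin d) =>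
        C * f₀ (vbar + c • (w' - vbar))) := (hcompint f₀ hf₀int).const_mul C
    have hGint : ∀ i : Fin d, Integrable
        (fun y : EuclideanSpace ℝ (Fin d) => (vbar i + c⁻¹ * (y i - vbar i)) * f₀ y) := by
      intro i
      have h1 : (fun y : EuclideanSpace ℝ (Fin d) => (vbar i + c⁻¹ * (y i - vbar i)) * f₀ y)
          = fun y => (vbar i * (1 - c⁻¹)) * f₀ y + c⁻¹ * (y i * f₀ y) := by
        funext y; ring
      rw [h1]
      exact (hf₀int.const_mul _).add ((hmomi i).const_mul _)
    have hGval : ∀ i : Fin d, ∫ y, (vbar i + c⁻¹ * (y i - vbar i)) * f₀ y = m * vbar i := by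
      intro i
      have h1 : (fun y : EuclideanSpace ℝ (Fin d) => (vbar i + c⁻¹ * (y i - vbar i)) * f₀ y)
          = fun y => (vbar i * (1 - c⁻¹)) * f₀ y + c⁻¹ * (y i * f₀ y) := by
        funext y; ring
      rw [h1, integral_add ((hf₀int.const_mul _)) ((hmomi i).const_mul _),
        MeasureTheory.integral_const_mul, MeasureTheory.integral_const_mul, hmomval i, ← hm]
      field_simp
      ring
    have heqi : ∀ i : Fin d, (fun w' : EuclideanSpace ℝ (Fin d) =>
          (w' i) * (C * f₀ (vbar + c • (w' - vbar))))
        = fun w' => C * ((fun y => (vbar i + c⁻¹ * (y i - vbar i)) * f₀ y)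
            (vbar + c • (w' - vbar))) := by
      intro i
      funext w'
      simp only [PiLp.add_apply, PiLp.smul_apply, PiLp.sub_apply, smul_eq_mul]
      rw [add_sub_cancel_left]
      field_simp
      ring
    have hmm : ∀ i : Fin d, Integrable (fun w' : EuclideanSpace ℝ (Fin d) =>
        (w' i) * (C * f₀ (vbar + c • (w' - vbar)))) := by
      intro i
      rw [heqi i]
      exact (hcompint _ (hGint i)).const_mul C
    have I1 : ∫ w', C * f₀ (vbar + c • (w' - vbar)) = m := by
      rw [MeasureTheory.integral_const_mul, subst f₀, ← hm, hCd]
      field_simp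
    have I2 : ∀ i : Fin d, ∫ w', (w' i) * (C * f₀ (vbar + c • (w' - vbar))) = m * vbar i := by
      intro i
      rw [heqi i, MeasureTheory.integral_const_mul,
        subst (fun y => (vbar i + c⁻¹ * (y i - vbar i)) * f₀ y), hGval i, hCd]
      field_simp
    have keyI : ∀ (i : Fin d) (w : EuclideanSpace ℝ (Fin d)),
        ∫ w', (w i - w' i) * (C * f₀ (vbar + c • (w' - vbar))) = m * (w i - vbar i) := by
      intro i w
      have hsplit : (fun w' : EuclideanSpace ℝ (Fin d) =>
            (w i - w' i) * (C * f₀ (vbar + c • (w' - vbar))))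
          = fun w' => (w i) * (C * f₀ (vbar + c • (w' - vbar)))
              - (w' i) * (C * f₀ (vbar + c • (w' - vbar))) := by
        funext w'; ring
      rw [hsplit, integral_sub (hftint.const_mul _) (hmm i),
        MeasureTheory.integral_const_mul, I1, I2 i]
      ring

    -- derivative part
    set u : EuclideanSpace ℝ (Fin d) := vbar + c • (v - vbar) with hu
    have hf₀diff : ∀ x, HasFDerivAt f₀ (fderiv ℝ f₀ x) x :=
      fun x => ((hf₀C1.differentiable one_ne_zero) x).hasFDerivAt
    set L : EuclideanSpace ℝ (Fin d) →L[ℝ] ℝ := fderiv ℝ f₀ u with hL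
    have haff : HasFDerivAt (fun w : EuclideanSpace ℝ (Fin d) => vbar + c • (w - vbar))
        (c • ContinuousLinearMap.id ℝ (EuclideanSpace ℝ (Fin d))) v :=
      (((hasFDerivAt_id v).sub_const vbar).const_smul c).const_add vbar
    have hft : HasFDerivAt (fun w : EuclideanSpace ℝ (Fin d) => C * f₀ (vbar + c • (w - vbar)))
        (C • (L.comp (c • ContinuousLinearMap.id ℝ (EuclideanSpace ℝ (Fin d))))) v := by
      have h := ((hf₀diff u).comp v haff).const_mul C
      simpa [Function.comp_def] using h
    have hlin : ∀ i : Fin d, HasFDerivAt (fun w : EuclideanSpace ℝ (Fin d) => m * (w i - vbar i))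
        (m • (EuclideanSpace.proj (𝕜 := ℝ) i)) v := by
      intro i
      exact (((EuclideanSpace.proj (𝕜 := ℝ) i).hasFDerivAt).sub_const (vbar i)).const_mul m
    have hprod : ∀ i : Fin d, HasFDerivAt
        (fun w : EuclideanSpace ℝ (Fin d) =>
          (m * (w i - vbar i)) * (C * f₀ (vbar + c • (w - vbar))))
        ((m * (v i - vbar i)) • (C • (L.comp (c • ContinuousLinearMap.id ℝ (EuclideanSpace ℝ (Fin d)))))
          + (C * f₀ (vbar + c • (v - vbar))) • (m • (EuclideanSpace.proj (𝕜 := ℝ) i))) v :=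
      fun i => (hlin i).mul hft
    have happ : ∀ i : Fin d,
        ((m * (v i - vbar i)) • (C • (L.comp (c • ContinuousLinearMap.id ℝ (EuclideanSpace ℝ (Fin d)))))
          + (C * f₀ (vbar + c • (v - vbar))) • (m • (EuclideanSpace.proj (𝕜 := ℝ) i)))
          (EuclideanSpace.single i 1)
        = (m * (v i - vbar i)) * (C * (c * L (EuclideanSpace.single i 1)))
          + (C * f₀ u) * m := by
      intro i
      simp [ContinuousLinearMap.add_apply, ContinuousLinearMap.smul_apply,
        ContinuousLinearMap.comp_apply, ContinuousLinearMap.id_apply, smul_eq_mul,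
        EuclideanSpace.single_apply, ← hu, _root_.map_smul]
    have hbasis : (∑ i : Fin d, (v - vbar) i • EuclideanSpace.single i (1 : ℝ)) = v - vbar := by
      ext j
      rw [WithLp.ofLp_sum, Finset.sum_apply]
      simp [EuclideanSpace.single_apply]
    have hsum : (∑ i : Fin d, (v i - vbar i) * L (EuclideanSpace.single i 1)) = L (v - vbar) := by
      conv_rhs => rw [← hbasis]
      rw [map_sum]
      exact Finset.sum_congr rfl fun i _ => by
        simp [smul_eq_mul]
    -- time derivative
    have h1 : HasDerivAt (fun s : ℝ => γ * m * (d : ℝ) * s) (γ * m * (d : ℝ)) t := by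
      simpa using (hasDerivAt_id t).const_mul (γ * m * (d : ℝ))
    have hA : HasDerivAt (fun s : ℝ => exp (γ * m * (d : ℝ) * s)) (C * (γ * m * (d : ℝ))) t := h1.exp
    have h2 : HasDerivAt (fun s : ℝ => γ * m * s) (γ * m) t := by
      simpa using (hasDerivAt_id t).const_mul (γ * m)
    have hB : HasDerivAt (fun s : ℝ => vbar + exp (γ * m * s) • (v - vbar))
        ((c * (γ * m)) • (v - vbar)) t :=
      ((h2.exp.smul_const (v - vbar)).const_add vbar)
    have hcompB : HasDerivAt (fun s : ℝ => f₀ (vbar + exp (γ * m * s) • (v - vbar)))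
        (L ((c * (γ * m)) • (v - vbar))) t := by
      have := (hf₀diff u).comp_hasDerivAt t hB
      exact this
    have hD : HasDerivAt
        (fun s : ℝ => exp (γ * m * (d : ℝ) * s) * f₀ (vbar + exp (γ * m * s) • (v - vbar)))
        ((C * (γ * m * (d : ℝ))) * f₀ (vbar + exp (γ * m * t) • (v - vbar))
          + exp (γ * m * (d : ℝ) * t) * (L ((c * (γ * m)) • (v - vbar)))) t := hA.mul hcompB
    -- assemble
    have hftfun : f t = fun w => C * f₀ (vbar + c • (w - vbar)) := funext fun w => hf t w
    have hfun : ∀ i : Fin d, (fun w : EuclideanSpace ℝ (Fin d) =>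
          (∫ w', (w i - w' i) * f t w') * f t w)
        = fun w => (m * (w i - vbar i)) * (C * f₀ (vbar + c • (w - vbar))) := by
      intro i
      funext w
      simp only [hftfun]
      rw [keyI i w]
    have hterm : ∀ i : Fin d,
        fderiv ℝ (fun w => (∫ w', (w i - w' i) * f t w') * f t w) v (EuclideanSpace.single i 1)
        = m * (v i - vbar i) * (C * (c * L (EuclideanSpace.single i 1))) + C * f₀ u * m := by
      intro i
      rw [hfun i, (hprod i).fderiv, happ i]
    have hfv : (fun s => f s v)
        = fun s => exp (γ * m * (d : ℝ) * s) * f₀ (vbar + exp (γ * m * s) • (v - vbar)) :=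
      funext fun s => hf s v
    have hval : (γ * ∑ i : Fin d,
          fderiv ℝ (fun w => (∫ w', (w i - w' i) * f t w') * f t w) v
            (EuclideanSpace.single i 1))
        = (C * (γ * m * (d : ℝ))) * f₀ (vbar + exp (γ * m * t) • (v - vbar))
          + exp (γ * m * (d : ℝ) * t) * (L ((c * (γ * m)) • (v - vbar))) := by
      rw [Finset.sum_congr rfl fun i _ => hterm i, Finset.sum_add_distrib, Finset.sum_const,
        Finset.card_univ, Fintype.card_fin, nsmul_eq_mul]
      have hLs : L ((c * (γ * m)) • (v - vbar)) = (c * (γ * m)) * L (v - vbar) := by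
        rw [_root_.map_smul, smul_eq_mul]
      have h3 : (∑ i : Fin d, m * (v i - vbar i) * (C * (c * L (EuclideanSpace.single i 1))))
          = (m * C * c) * L (v - vbar) := by
        rw [← hsum, Finset.mul_sum]
        exact Finset.sum_congr rfl fun i _ => by ring
      rw [h3, hLs, ← hc, ← hC, ← hu]
      ring
    rw [hfv, hval]
    exact hD
end
end

section
/- Under the explicit solution f(t,v) = exp(γ m d t) f₀(v̄ + exp(γ m t)(v − v̄)), the entropy H[f(t)] = ∫ f(t,v) log f(t,v) dv grows linearly in time: H[f(t)] = H[f₀] + γ m d t · ∫ f₀(v) dv for all t ≥ 0. -/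
open MeasureTheory Real

noncomputable section

/-- Change of variables for the affine map `v ↦ vbar + c • (v - vbar)` on Euclidean space. -/
lemma aux_cov {d : ℕ} (vbar : EuclideanSpace ℝ (Fin d)) (c : ℝ) (hc : 0 ≤ c)
    (g : EuclideanSpace ℝ (Fin d) → ℝ) :
    (∫ v, g (vbar + c • (v - vbar))) = (c ^ d)⁻¹ * ∫ v, g v := by
  simp only [sub_eq_add_neg]
  rw [integral_add_right_eq_self (fun w => g (vbar + c • w)) (-vbar)]
  have h2 : (∫ w, (fun u => g (vbar + u)) (c • w))
      = (c ^ Module.finrank ℝ (EuclideanSpace ℝ (Fin d)))⁻¹ • ∫ u, g (vbar + u) :=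
    MeasureTheory.Measure.integral_comp_smul_of_nonneg volume (fun u => g (vbar + u)) c (hR := hc)
  simp only [finrank_euclideanSpace_fin] at h2
  rw [h2, integral_add_left_eq_self g vbar, smul_eq_mul]

/-- Under the explicit solution `f(t,v) = exp(γ m d t) f₀(v̄ + exp(γ m t)(v − v̄))`,
the entropy `H[f(t)] = ∫ f log f dv` grows linearly:
`H[f(t)] = H[f₀] + γ m d t ∫ f₀`. (Here `Real.log 0 = 0` encodes `0 log 0 = 0`.) -/
theorem stmt6 (d : ℕ) (hd : 1 ≤ d) (γ : ℝ) (hγ : 0 < γ)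
    (f₀ : EuclideanSpace ℝ (Fin d) → ℝ)
    (hf₀nonneg : ∀ v, 0 ≤ f₀ v)
    (hf₀int : Integrable f₀)
    (hf₀ent : Integrable (fun v => f₀ v * Real.log (f₀ v)))
    (m : ℝ) (hm : m = ∫ v, f₀ v) (hmpos : 0 < m)
    (vbar : EuclideanSpace ℝ (Fin d))
    (f : ℝ → EuclideanSpace ℝ (Fin d) → ℝ)
    (hf : ∀ t v, f t v = exp (γ * m * (d : ℝ) * t) * f₀ (vbar + exp (γ * m * t) • (v - vbar))) :
    ∀ t : ℝ, 0 ≤ t →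
      (∫ v, f t v * Real.log (f t v))
        = (∫ v, f₀ v * Real.log (f₀ v)) + γ * m * (d : ℝ) * t * ∫ v, f₀ v := by
  intro t _
  set a : ℝ := γ * m * t with ha
  set c : ℝ := Real.exp a with hc
  have hcd : Real.exp (γ * m * (d : ℝ) * t) = c ^ d := by
    rw [hc, ha, ← Real.exp_nat_mul]; ring_nf
  -- pointwise rewriting of the integrand
  have hpt : ∀ v, f t v * Real.log (f t v)
      = c ^ d * ((fun w => f₀ w * Real.log (f₀ w) + (γ * m * (d : ℝ) * t) * f₀ w)
          (vbar + Real.exp (γ * m * t) • (v - vbar))) := by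
    intro v
    rw [hf t v, hcd]
    set x := f₀ (vbar + Real.exp (γ * m * t) • (v - vbar)) with hx
    have hxnn : 0 ≤ x := hf₀nonneg _
    rcases hxnn.eq_or_lt with h0 | hpos
    · simp only [← hx, ← h0]; simp
    · have hcpos : 0 < c ^ d := pow_pos (Real.exp_pos a) d
      rw [Real.log_mul (ne_of_gt hcpos) (ne_of_gt hpos)]
      have : Real.log (c ^ d) = γ * m * (d : ℝ) * t := by
        rw [← hcd, Real.log_exp]
      rw [this]; ring
  rw [integral_congr_ae (Filter.Eventually.of_forall hpt)]
  rw [integral_const_mul]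
  rw [aux_cov vbar (Real.exp (γ * m * t)) (Real.exp_nonneg _)
      (fun w => f₀ w * Real.log (f₀ w) + γ * m * (d : ℝ) * t * f₀ w)]
  have hne : (c ^ d : ℝ) ≠ 0 := ne_of_gt (pow_pos (Real.exp_pos a) d)
  rw [show Real.exp (γ * m * t) = c from rfl, ← mul_assoc, mul_inv_cancel₀ hne, one_mul]
  rw [integral_add hf₀ent (hf₀int.const_mul _)]
  rw [integral_const_mul]
end
end

section
/- Let a, b : [0,∞) → [0,∞) be measurable with ε := ∫₀^∞ a(s) ds < ∞ and δ := ∫₀^∞ (1+s) b(s) ds < ∞, and let A, B : [0,∞) → [0,∞) be absolutely continuous functions satisfying A'(t) ≤ a(t) A(t) + b(t) A(t) B(t) and B'(t) ≤ A(t) + a(t) B(t) for almost every t ≥ 0. Then, provided ε and δ are sufficiently small depending on A(0) and B(0), there exists a constant C = C(A(0), B(0)) such that A(t) ≤ C and B(t) ≤ C(1+t) for all t ≥ 0. -/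
open MeasureTheory Real Set Topology Filter

noncomputable section

set_option maxHeartbeats 1000000 in
/-- Coupled Gronwall-type inequalities: if `A' ≤ aA + bAB`, `B' ≤ A + aB` a.e. on
`(0,∞)` (with `A, B` absolutely continuous, expressed through the fundamental theorem
of calculus), and `ε = ∫₀^∞ a`, `δ = ∫₀^∞ (1+s) b(s) ds` are sufficiently small
(depending on `A(0), B(0)`), then `A(t) ≤ C` and `B(t) ≤ C(1+t)` for some
`C = C(A(0), B(0))`. -/
theorem stmt9 (A0 B0 : ℝ) (hA0 : 0 ≤ A0) (hB0 : 0 ≤ B0) :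
    ∃ ε₀ δ₀ C : ℝ, 0 < ε₀ ∧ 0 < δ₀ ∧ 0 < C ∧
      ∀ (a b A B A' B' : ℝ → ℝ),
        Measurable a → Measurable b →
        (∀ t, 0 ≤ a t) → (∀ t, 0 ≤ b t) →
        (∀ t, 0 ≤ A t) → (∀ t, 0 ≤ B t) →
        A 0 = A0 → B 0 = B0 →
        IntegrableOn a (Ioi 0) →
        IntegrableOn (fun s => (1 + s) * b s) (Ioi 0) →
        (∫ s in Ioi (0 : ℝ), a s) < ε₀ →
        (∫ s in Ioi (0 : ℝ), (1 + s) * b s) < δ₀ →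
        (∀ t, 0 ≤ t → IntervalIntegrable A' volume 0 t ∧ A t = A 0 + ∫ s in (0 : ℝ)..t, A' s) →
        (∀ t, 0 ≤ t → IntervalIntegrable B' volume 0 t ∧ B t = B 0 + ∫ s in (0 : ℝ)..t, B' s) →
        (∀ᵐ t ∂(volume.restrict (Ioi (0 : ℝ))), A' t ≤ a t * A t + b t * A t * B t) →
        (∀ᵐ t ∂(volume.restrict (Ioi (0 : ℝ))), B' t ≤ A t + a t * B t) →
        ∀ t, 0 ≤ t → A t ≤ C ∧ B t ≤ C * (1 + t) := by
  obtain ⟨C, hCdef⟩ : ∃ C : ℝ, C = 4*A0 + 2*B0 + 1 := ⟨_, rfl⟩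
  have hCpos : (0:ℝ) < C := by rw [hCdef]; positivity
  refine ⟨1/4, 1/(4*C), C, by norm_num, one_div_pos.2 (by linarith), hCpos, ?_⟩
  intro a b A B A' B' ha_m hb_m ha0 hb0 hApos hBpos hA0eq hB0eq ha_int hb_int hε hδ hFA hFB
    haeA haeB
  obtain ⟨ε, hεdef⟩ : ∃ e : ℝ, e = ∫ s in Ioi (0:ℝ), a s := ⟨_, rfl⟩
  obtain ⟨δ, hδdef⟩ : ∃ d : ℝ, d = ∫ s in Ioi (0:ℝ), (1+s) * b s := ⟨_, rfl⟩
  rw [← hεdef] at hε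
  rw [← hδdef] at hδ
  have hε0 : 0 ≤ ε := hεdef ▸ setIntegral_nonneg measurableSet_Ioi fun x _ => ha0 x
  have hδ0 : 0 ≤ δ := hδdef ▸ setIntegral_nonneg measurableSet_Ioi (fun x hx =>
    mul_nonneg (by simp only [mem_Ioi] at hx; linarith) (hb0 x))
  have hCε : C * ε < C * (1/4) := mul_lt_mul_of_pos_left hε hCpos
  have hCδ : C * δ < 1/4 := by
    have h := mul_lt_mul_of_pos_left hδ hCpos
    calc C * δ < C * (1/(4*C)) := h
    _ = 1/4 := by field_simp
  have hCCδ : C * (C * δ) < C * (1/4) := mul_lt_mul_of_pos_left hCδ hCpos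
  -- continuity of A and B on compact intervals
  have contA : ∀ T, 0 ≤ T → ContinuousOn A (Icc 0 T) := by
    intro T hT
    have h1 := intervalIntegral.continuousOn_primitive_interval' (hFA T hT).1 left_mem_uIcc
    rw [uIcc_of_le hT] at h1
    exact (continuousOn_const.add h1).congr fun x hx => (hFA x hx.1).2
  have contB : ∀ T, 0 ≤ T → ContinuousOn B (Icc 0 T) := by
    intro T hT
    have h1 := intervalIntegral.continuousOn_primitive_interval' (hFB T hT).1 left_mem_uIcc
    rw [uIcc_of_le hT] at h1
    exact (continuousOn_const.add h1).congr fun x hx => (hFB x hx.1).2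
  -- core estimate
  have hcore : ∀ τ, 0 ≤ τ → (∀ s ∈ Icc (0:ℝ) τ, A s ≤ C ∧ B s ≤ C*(1+s)) →
      ∀ t ∈ Icc (0:ℝ) τ, A t < C ∧ B t < C*(1+t) := by
    intro τ hτ Hb
    have key1 : ∀ t ∈ Icc (0:ℝ) τ, A t ≤ A0 + C*(ε + C*δ) := by
      rintro t ⟨ht0, htτ⟩
      have hIa : IntegrableOn a (Ioc 0 t) := ha_int.mono_set Ioc_subset_Ioi_self
      have hIb : IntegrableOn (fun s => (1+s)*b s) (Ioc 0 t) :=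
        hb_int.mono_set Ioc_subset_Ioi_self
      have hIg : IntegrableOn (fun s => C * (a s + C * ((1+s) * b s))) (Ioc 0 t) :=
        (hIa.add (hIb.const_mul C)).const_mul C
      have hIA' : IntegrableOn A' (Ioc 0 t) := by
        have h := (hFA t ht0).1
        rwa [intervalIntegrable_iff_integrableOn_Ioc_of_le ht0] at h
      have hae : ∀ᵐ s ∂(volume.restrict (Ioc (0:ℝ) t)),
          A' s ≤ C * (a s + C * ((1+s) * b s)) := by
        have h1 : ∀ᵐ s ∂(volume.restrict (Ioc (0:ℝ) t)),
            A' s ≤ a s * A s + b s * A s * B s :=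
          ae_restrict_of_ae_restrict_of_subset Ioc_subset_Ioi_self haeA
        have h2 : ∀ᵐ s ∂(volume.restrict (Ioc (0:ℝ) t)), s ∈ Ioc (0:ℝ) t :=
          ae_restrict_mem measurableSet_Ioc
        filter_upwards [h1, h2] with s hs hmem
        obtain ⟨hAs, hBs⟩ := Hb s ⟨hmem.1.le, hmem.2.trans htτ⟩
        have e1 : a s * A s ≤ a s * C := mul_le_mul_of_nonneg_left hAs (ha0 s)
        have e2 : A s * B s ≤ C * (C * (1+s)) := mul_le_mul hAs hBs (hBpos s) hCpos.le
        have e3 : b s * (A s * B s) ≤ b s * (C * (C * (1+s))) :=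
          mul_le_mul_of_nonneg_left e2 (hb0 s)
        nlinarith [hs, e1, e3]
      have h1 : A t ≤ A0 + ∫ s in Ioc (0:ℝ) t, C * (a s + C * ((1+s) * b s)) := by
        rw [(hFA t ht0).2, hA0eq, intervalIntegral.integral_of_le ht0]
        exact add_le_add_right (setIntegral_mono_ae_restrict hIA' hIg hae) A0
      have hX : ∫ s in Ioc (0:ℝ) t, a s ≤ ε := by
        rw [hεdef]
        exact setIntegral_mono_set ha_int (Filter.Eventually.of_forall fun x => ha0 x)
          (HasSubset.Subset.eventuallyLE Ioc_subset_Ioi_self)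
      have hY : ∫ s in Ioc (0:ℝ) t, (1+s) * b s ≤ δ := by
        rw [hδdef]
        refine setIntegral_mono_set hb_int ?_
          (HasSubset.Subset.eventuallyLE Ioc_subset_Ioi_self)
        filter_upwards [ae_restrict_mem measurableSet_Ioi] with x hx
        exact mul_nonneg (by simp only [mem_Ioi] at hx; linarith) (hb0 x)
      have h2 : ∫ s in Ioc (0:ℝ) t, C * (a s + C * ((1+s) * b s)) ≤ C * (ε + C * δ) := by
        rw [integral_const_mul, integral_add hIa (hIb.const_mul C), integral_const_mul]
        have := mul_le_mul_of_nonneg_left hY hCpos.le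
        exact mul_le_mul_of_nonneg_left (add_le_add hX this) hCpos.le
      linarith
    have hqlt : A0 + C*(ε + C*δ) < C := by nlinarith [hCε, hCCδ]
    rintro t ⟨ht0, htτ⟩
    constructor
    · exact lt_of_le_of_lt (key1 t ⟨ht0, htτ⟩) hqlt
    · -- estimate for B
      have hIa : IntegrableOn a (Ioc 0 t) := ha_int.mono_set Ioc_subset_Ioi_self
      have hIB' : IntegrableOn B' (Ioc 0 t) := by
        have h := (hFB t ht0).1
        rwa [intervalIntegrable_iff_integrableOn_Ioc_of_le ht0] at h
      obtain ⟨q, hqdef⟩ : ∃ q : ℝ, q = A0 + C*(ε + C*δ) := ⟨_, rfl⟩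
      have hIu : IntegrableOn (fun s => q + (C*(1+t)) * a s) (Ioc 0 t) :=
        (integrableOn_const measure_Ioc_lt_top.ne).add (hIa.const_mul _)
      have hae : ∀ᵐ s ∂(volume.restrict (Ioc (0:ℝ) t)),
          B' s ≤ q + (C*(1+t)) * a s := by
        have h1 : ∀ᵐ s ∂(volume.restrict (Ioc (0:ℝ) t)), B' s ≤ A s + a s * B s :=
          ae_restrict_of_ae_restrict_of_subset Ioc_subset_Ioi_self haeB
        have h2 : ∀ᵐ s ∂(volume.restrict (Ioc (0:ℝ) t)), s ∈ Ioc (0:ℝ) t :=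
          ae_restrict_mem measurableSet_Ioc
        filter_upwards [h1, h2] with s hs hmem
        have hsτ : s ∈ Icc (0:ℝ) τ := ⟨hmem.1.le, (hmem.2.trans htτ)⟩
        have hAs : A s ≤ q := hqdef ▸ key1 s hsτ
        have hBs : B s ≤ C * (1+s) := (Hb s hsτ).2
        have e1 : a s * B s ≤ a s * (C * (1+t)) := by
          refine mul_le_mul_of_nonneg_left (hBs.trans ?_) (ha0 s)
          have : s ≤ t := hmem.2
          nlinarith
        nlinarith [hs, e1]
      have h1 : B t ≤ B0 + ∫ s in Ioc (0:ℝ) t, (q + (C*(1+t)) * a s) := by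
        rw [(hFB t ht0).2, hB0eq, intervalIntegral.integral_of_le ht0]
        exact add_le_add_right (setIntegral_mono_ae_restrict hIB' hIu hae) B0
      have hX : ∫ s in Ioc (0:ℝ) t, a s ≤ ε := by
        rw [hεdef]
        exact setIntegral_mono_set ha_int (Filter.Eventually.of_forall fun x => ha0 x)
          (HasSubset.Subset.eventuallyLE Ioc_subset_Ioi_self)
      have h2 : ∫ s in Ioc (0:ℝ) t, (q + (C*(1+t)) * a s) ≤ q * t + (C*(1+t)) * ε := by
        rw [integral_add (integrableOn_const (C := q) measure_Ioc_lt_top.ne) (hIa.const_mul _),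
          integral_const_mul]
        have hconst : ∫ _ in Ioc (0:ℝ) t, q = q * t := by
          rw [setIntegral_const, Real.volume_real_Ioc_of_le ht0, smul_eq_mul]
          ring
        rw [hconst]
        have hco : (0:ℝ) ≤ C * (1+t) := by nlinarith
        exact add_le_add_right (mul_le_mul_of_nonneg_left hX hco) _
      have hBt : B t ≤ B0 + (q * t + (C*(1+t)) * ε) := by linarith
      have c1 : B0 + C*ε < C := by nlinarith [hCε]
      have c2 : q + C*ε ≤ C := by rw [hqdef]; nlinarith [hCε, hCCδ]
      nlinarith [mul_le_mul_of_nonneg_right c2 ht0, mul_le_mul_of_nonneg_right hCε.le ht0]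
  -- bootstrap via infimum of bad times
  have main : ∀ t, 0 ≤ t → A t ≤ C ∧ B t ≤ C * (1 + t) := by
    by_contra h
    push_neg at h
    obtain ⟨s₀, hs₀, hbad₀⟩ : ∃ s, 0 ≤ s ∧ ¬(A s ≤ C ∧ B s ≤ C * (1 + s)) := by
      obtain ⟨s, hs1, hs2⟩ := h
      exact ⟨s, hs1, fun hc => absurd (hs2 hc.1) (not_lt.2 hc.2)⟩
    set F : Set ℝ := {x | 0 ≤ x ∧ ¬(A x ≤ C ∧ B x ≤ C * (1 + x))} with hFdef
    have hFne : F.Nonempty := ⟨s₀, hs₀, hbad₀⟩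
    have hFbdd : BddBelow F := ⟨0, fun x hx => hx.1⟩
    set τ := sInf F with hτdef
    have hτ0 : 0 ≤ τ := le_csInf hFne fun x hx => hx.1
    have hnotlt : ∀ x, 0 ≤ x → x < τ → A x ≤ C ∧ B x ≤ C * (1 + x) := by
      intro x hx0 hxτ
      by_contra hx
      exact absurd (csInf_le hFbdd ⟨hx0, hx⟩) (not_le.2 hxτ)
    have hgood : ∀ s ∈ Icc (0:ℝ) τ, A s ≤ C ∧ B s ≤ C * (1 + s) := by
      rintro x ⟨hx0, hxτ⟩
      rcases eq_or_lt_of_le hxτ with heq | hlt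
      · rcases eq_or_lt_of_le hx0 with h0 | hpos
        · rw [← h0, hA0eq, hB0eq]
          constructor <;> nlinarith
        · have hcA : ContinuousWithinAt A (Icc 0 x) x := contA x hx0 x (right_mem_Icc.2 hx0)
          have hcB : ContinuousWithinAt B (Icc 0 x) x := contB x hx0 x (right_mem_Icc.2 hx0)
          have hIco : 𝓝[Ico (0:ℝ) x] x = 𝓝[<] x := nhdsWithin_Ico_eq_nhdsLT hpos
          have htendA : Filter.Tendsto A (𝓝[<] x) (𝓝 (A x)) := by
            rw [← hIco]; exact hcA.mono Ico_subset_Icc_self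
          have htendB : Filter.Tendsto B (𝓝[<] x) (𝓝 (B x)) := by
            rw [← hIco]; exact hcB.mono Ico_subset_Icc_self
          have hev : ∀ᶠ y in 𝓝[<] x, A y ≤ C ∧ B y ≤ C * (1 + y) := by
            rw [← hIco]
            filter_upwards [self_mem_nhdsWithin] with y hy
            exact hnotlt y hy.1 (heq ▸ hy.2)
          constructor
          · exact le_of_tendsto htendA (hev.mono fun y hy => hy.1)
          · have htendg : Filter.Tendsto (fun y => C * (1 + y)) (𝓝[<] x) (𝓝 (C * (1 + x))) :=
              ((continuous_const.mul (continuous_const.add continuous_id)).tendsto x).mono_left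
                nhdsWithin_le_nhds
            exact le_of_tendsto_of_tendsto htendB htendg (hev.mono fun y hy => hy.2)
      · exact hnotlt x hx0 hlt
    have hstrict := hcore τ hτ0 hgood τ ⟨hτ0, le_refl τ⟩
    have hT1 : (0:ℝ) ≤ τ + 1 := by linarith
    have hτmem : τ ∈ Icc (0:ℝ) (τ+1) := ⟨hτ0, by linarith⟩
    have hcA1 : ContinuousWithinAt A (Icc 0 (τ+1)) τ := contA (τ+1) hT1 τ hτmem
    have hcB1 : ContinuousWithinAt B (Icc 0 (τ+1)) τ := contB (τ+1) hT1 τ hτmem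
    have hevA : ∀ᶠ x in 𝓝[Icc (0:ℝ) (τ+1)] τ, A x < C :=
      hcA1.eventually_lt_const hstrict.1
    have hevB : ∀ᶠ x in 𝓝[Icc (0:ℝ) (τ+1)] τ, B x - C * (1 + x) < 0 := by
      have hc : ContinuousWithinAt (fun x => B x - C * (1 + x)) (Icc 0 (τ+1)) τ :=
        hcB1.sub ((continuous_const.mul (continuous_const.add continuous_id)).continuousWithinAt)
      exact hc.eventually_lt_const (by simpa using sub_neg.2 hstrict.2)
    have hev : ∀ᶠ x in 𝓝[Icc (0:ℝ) (τ+1)] τ, A x ≤ C ∧ B x ≤ C * (1 + x) := by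
      filter_upwards [hevA, hevB] with x h1 h2
      exact ⟨h1.le, by linarith⟩
    obtain ⟨U, hUopen, hτU, hUsub⟩ : ∃ U, IsOpen U ∧ τ ∈ U ∧
        U ∩ Icc (0:ℝ) (τ+1) ⊆ {x | A x ≤ C ∧ B x ≤ C * (1 + x)} := by
      rcases mem_nhdsWithin.1 hev with ⟨U, h1, h2, h3⟩
      exact ⟨U, h1, h2, h3⟩
    obtain ⟨η, hη, hball⟩ := Metric.isOpen_iff.1 hUopen τ hτU
    set η' : ℝ := min (η/2) 1 with hη'def
    have hη'pos : 0 < η' := lt_min (by linarith) one_pos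
    have hη'le : η' ≤ η/2 := min_le_left _ _
    have hη'le1 : η' ≤ 1 := min_le_right _ _
    have hok : ∀ x ∈ Icc τ (τ + η'), A x ≤ C ∧ B x ≤ C * (1 + x) := by
      rintro x ⟨hx1, hx2⟩
      apply hUsub
      constructor
      · apply hball
        rw [Metric.mem_ball, Real.dist_eq, abs_lt]
        constructor <;> linarith
      · exact ⟨hτ0.trans hx1, by linarith⟩
    have hle : τ + η' ≤ τ := by
      rw [hτdef]
      apply le_csInf hFne
      intro x hx
      by_contra hcon
      push_neg at hcon
      rcases le_or_gt x τ with hxle | hxgt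
      · rcases eq_or_lt_of_le hxle with heq | hlt
        · exact hx.2 (heq ▸ ⟨hstrict.1.le, hstrict.2.le⟩)
        · exact hx.2 (hnotlt x hx.1 hlt)
      · exact hx.2 (hok x ⟨hxgt.le, hcon.le⟩)
    linarith
  exact main
end
end

section
/- Let Φ : [0,∞) → [0,∞) be smooth, convex, nondecreasing, and let μ be a probability measure on ℝᵈ with barycenter u = ∫ v dμ(v). Then ∫ Φ'(|v|) (v/|v|)·(v − u) dμ(v) ≥ (∫ Φ'(|v|) dμ(v)) · (∫ (|v| − |u|) dμ(v)) ≥ 0, where the second factor is nonnegative since ∫ |v| dμ ≥ |∫ v dμ| = |u|. -/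
open MeasureTheory Real Set
open scoped RealInnerProductSpace

noncomputable section

/-- For a smooth convex nondecreasing `Φ : [0,∞) → [0,∞)` and a probability measure
`μ` on `ℝᵈ` with barycenter `u`,
`∫ Φ'(|v|) (v/|v|)·(v − u) dμ ≥ (∫ Φ'(|v|) dμ) (∫ (|v| − |u|) dμ) ≥ 0`.
(At `v = 0` the term is interpreted as `0`, consistent with division by zero.) -/
theorem stmt14 (d : ℕ) (hd : 1 ≤ d) (Φ : ℝ → ℝ)
    (hΦsmooth : ContDiff ℝ (⊤ : ℕ∞) Φ)
    (hΦconv : ConvexOn ℝ (Ici 0) Φ)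
    (hΦmono : MonotoneOn Φ (Ici 0))
    (hΦnonneg : ∀ r, 0 ≤ r → 0 ≤ Φ r)
    (μ : Measure (EuclideanSpace ℝ (Fin d))) [IsProbabilityMeasure μ]
    (hmom : Integrable (fun v => v) μ)
    (u : EuclideanSpace ℝ (Fin d)) (hu : u = ∫ v, v ∂μ)
    (h1 : Integrable (fun v => deriv Φ ‖v‖) μ)
    (h2 : Integrable (fun v => deriv Φ ‖v‖ * (⟪v, v - u⟫ / ‖v‖)) μ)
    (h3 : Integrable (fun v => ‖v‖) μ) :
    (∫ v, deriv Φ ‖v‖ * (⟪v, v - u⟫ / ‖v‖) ∂μ)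
        ≥ (∫ v, deriv Φ ‖v‖ ∂μ) * (∫ v, (‖v‖ - ‖u‖) ∂μ) ∧
    0 ≤ (∫ v, deriv Φ ‖v‖ ∂μ) * (∫ v, (‖v‖ - ‖u‖) ∂μ) := by
  classical
  set f : EuclideanSpace ℝ (Fin d) → ℝ := fun v => deriv Φ ‖v‖ with hfdef
  set g : EuclideanSpace ℝ (Fin d) → ℝ := fun v => ‖v‖ - ‖u‖ with hgdef
  have hΦdiff : Differentiable ℝ Φ := hΦsmooth.differentiable (by simp)
  have hmono' : MonotoneOn (deriv Φ) (Ici 0) :=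
    hΦconv.monotoneOn_deriv (fun x _ => hΦdiff x)
  have hd0 : 0 ≤ deriv Φ 0 := by
    have hda : HasDerivAt Φ (deriv Φ 0) 0 := (hΦdiff 0).hasDerivAt
    have htend : Filter.Tendsto (slope Φ 0) (nhdsWithin 0 {(0:ℝ)}ᶜ) (nhds (deriv Φ 0)) :=
      hasDerivAt_iff_tendsto_slope.1 hda
    have htend' : Filter.Tendsto (slope Φ 0) (nhdsWithin 0 (Ioi 0)) (nhds (deriv Φ 0)) :=
      htend.mono_left (nhdsWithin_mono 0 (fun x hx => ne_of_gt hx))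
    refine ge_of_tendsto htend' ?_
    filter_upwards [self_mem_nhdsWithin] with x hx
    have hx0 : (0:ℝ) < x := hx
    have h01 : Φ 0 ≤ Φ x := hΦmono self_mem_Ici hx0.le hx0.le
    have h02 : 0 ≤ (Φ x - Φ 0) / (x - 0) := div_nonneg (by linarith) (by linarith)
    simpa [slope_def_field, div_eq_inv_mul] using h02
  have hf0 : ∀ v : EuclideanSpace ℝ (Fin d), 0 ≤ f v := fun v =>
    hd0.trans (hmono' self_mem_Ici (norm_nonneg v) (norm_nonneg v))
  have contf : Continuous f := (hΦsmooth.continuous_deriv (by simp)).comp continuous_norm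
  have hsplit : ∀ v : EuclideanSpace ℝ (Fin d),
      f v * (⟪v, v - u⟫ / ‖v‖) = f v * ‖v‖ - f v * (⟪v, u⟫ / ‖v‖) := by
    intro v
    by_cases hv : v = 0
    · simp [hv]
    · have hn : ‖v‖ ≠ 0 := norm_ne_zero_iff.2 hv
      rw [inner_sub_right, real_inner_self_eq_norm_sq]
      field_simp
  have hm : Integrable (fun v : EuclideanSpace ℝ (Fin d) => f v * (⟪v, u⟫ / ‖v‖)) μ := by
    have hmeas : AEStronglyMeasurable
        (fun v : EuclideanSpace ℝ (Fin d) => f v * (⟪v, u⟫ / ‖v‖)) μ := by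
      refine (contf.aestronglyMeasurable.mul ?_)
      exact ((Continuous.inner continuous_id continuous_const).measurable.div
        continuous_norm.measurable).aestronglyMeasurable
    refine Integrable.mono' (h1.mul_const ‖u‖) hmeas ?_
    filter_upwards with v
    by_cases hv : v = 0
    · simp [hv, hf0]
      exact mul_nonneg (hf0 0) (norm_nonneg u)
    · have hn : (0:ℝ) < ‖v‖ := norm_pos_iff.2 hv
      have hcs : |⟪v, u⟫| ≤ ‖v‖ * ‖u‖ := abs_real_inner_le_norm v u
      have hdq : |⟪v, u⟫ / ‖v‖| ≤ ‖u‖ := by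
        rw [abs_div, abs_of_pos hn, div_le_iff₀ hn]
        linarith [hcs]
      calc |f v * (⟪v, u⟫ / ‖v‖)| = f v * |⟪v, u⟫ / ‖v‖| := by
            rw [abs_mul, abs_of_nonneg (hf0 v)]
        _ ≤ f v * ‖u‖ := mul_le_mul_of_nonneg_left hdq (hf0 v)
        _ = deriv Φ ‖v‖ * ‖u‖ := rfl
  have hF : Integrable (fun v : EuclideanSpace ℝ (Fin d) => f v * ‖v‖) μ := by
    have heq : (fun v : EuclideanSpace ℝ (Fin d) => f v * ‖v‖)
        = fun v => (f v * (⟪v, v - u⟫ / ‖v‖)) + f v * (⟪v, u⟫ / ‖v‖) := by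
      funext v; rw [hsplit v]; ring
    rw [heq]
    exact (h2.add hm).congr (Filter.Eventually.of_forall fun v => rfl)
  have hfg : Integrable (fun v : EuclideanSpace ℝ (Fin d) => f v * g v) μ := by
    have heq : (fun v : EuclideanSpace ℝ (Fin d) => f v * g v)
        = fun v => f v * ‖v‖ - f v * ‖u‖ := by
      funext v; simp only [hgdef]; ring
    rw [heq]
    exact (hF.sub (h1.mul_const ‖u‖)).congr (Filter.Eventually.of_forall fun v => rfl)
  have hgint : Integrable g μ :=
    (h3.sub (integrable_const ‖u‖)).congr (Filter.Eventually.of_forall fun v => rfl)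
  have cheb : (∫ v, f v ∂μ) * (∫ v, g v ∂μ) ≤ ∫ v, f v * g v ∂μ := by
    have hptw : ∀ p : EuclideanSpace ℝ (Fin d) × EuclideanSpace ℝ (Fin d),
        0 ≤ (f p.1 - f p.2) * (g p.1 - g p.2) := by
      intro p
      rcases le_total ‖p.1‖ ‖p.2‖ with h | h
      · have hle : f p.1 ≤ f p.2 := hmono' (norm_nonneg _) (norm_nonneg _) h
        have hgle : g p.1 ≤ g p.2 := by simp only [hgdef]; linarith
        nlinarith
      · have hle : f p.2 ≤ f p.1 := hmono' (norm_nonneg _) (norm_nonneg _) h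
        have hgle : g p.2 ≤ g p.1 := by simp only [hgdef]; linarith
        nlinarith
    have h11 : Integrable
        (fun p : EuclideanSpace ℝ (Fin d) × EuclideanSpace ℝ (Fin d) =>
          (f p.1 * g p.1) * (1:ℝ)) (μ.prod μ) := hfg.mul_prod (integrable_const 1)
    have h22 : Integrable
        (fun p : EuclideanSpace ℝ (Fin d) × EuclideanSpace ℝ (Fin d) =>
          (1:ℝ) * (f p.2 * g p.2)) (μ.prod μ) := (integrable_const (1:ℝ)).mul_prod hfg
    have h12 : Integrable
        (fun p : EuclideanSpace ℝ (Fin d) × EuclideanSpace ℝ (Fin d) =>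
          f p.1 * g p.2) (μ.prod μ) := h1.mul_prod hgint
    have h21 : Integrable
        (fun p : EuclideanSpace ℝ (Fin d) × EuclideanSpace ℝ (Fin d) =>
          g p.1 * f p.2) (μ.prod μ) := hgint.mul_prod h1
    have hA : Integrable
        (fun p : EuclideanSpace ℝ (Fin d) × EuclideanSpace ℝ (Fin d) =>
          (f p.1 * g p.1) * (1:ℝ) + (1:ℝ) * (f p.2 * g p.2)) (μ.prod μ) :=
      (h11.add h22).congr (Filter.Eventually.of_forall fun _ => rfl)
    have hB : Integrable
        (fun p : EuclideanSpace ℝ (Fin d) × EuclideanSpace ℝ (Fin d) =>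
          f p.1 * g p.2 + g p.1 * f p.2) (μ.prod μ) :=
      (h12.add h21).congr (Filter.Eventually.of_forall fun _ => rfl)
    have hprodpos : 0 ≤ ∫ p : EuclideanSpace ℝ (Fin d) × EuclideanSpace ℝ (Fin d),
        ((f p.1 * g p.1) * (1:ℝ) + (1:ℝ) * (f p.2 * g p.2))
          - (f p.1 * g p.2 + g p.1 * f p.2) ∂(μ.prod μ) := by
      refine integral_nonneg fun p => ?_
      have hr : (f p.1 * g p.1) * (1:ℝ) + (1:ℝ) * (f p.2 * g p.2)
          - (f p.1 * g p.2 + g p.1 * f p.2) = (f p.1 - f p.2) * (g p.1 - g p.2) := by ring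
      rw [hr]; exact hptw p
    have e11 := integral_prod_mul (μ := μ) (ν := μ)
      (fun v : EuclideanSpace ℝ (Fin d) => f v * g v) (fun _ : EuclideanSpace ℝ (Fin d) => (1:ℝ))
    have e22 := integral_prod_mul (μ := μ) (ν := μ)
      (fun _ : EuclideanSpace ℝ (Fin d) => (1:ℝ)) (fun v : EuclideanSpace ℝ (Fin d) => f v * g v)
    have e12 := integral_prod_mul (μ := μ) (ν := μ) f g
    have e21 := integral_prod_mul (μ := μ) (ν := μ) g f
    have hone : (∫ _ : EuclideanSpace ℝ (Fin d), (1:ℝ) ∂μ) = 1 := by simp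
    rw [integral_sub hA hB, integral_add h11 h22, integral_add h12 h21,
      e11, e22, e12, e21, hone] at hprodpos
    nlinarith [hprodpos]
  have hpt : ∀ v : EuclideanSpace ℝ (Fin d), f v * g v ≤ f v * (⟪v, v - u⟫ / ‖v‖) := by
    intro v
    rw [hsplit v]
    have hle : f v * (⟪v, u⟫ / ‖v‖) ≤ f v * ‖u‖ := by
      refine mul_le_mul_of_nonneg_left ?_ (hf0 v)
      by_cases hv : v = 0
      · simp [hv]
      · have hn : (0:ℝ) < ‖v‖ := norm_pos_iff.2 hv
        rw [div_le_iff₀ hn]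
        calc ⟪v, u⟫ ≤ ‖v‖ * ‖u‖ := real_inner_le_norm v u
          _ = ‖u‖ * ‖v‖ := by ring
    simp only [hgdef]
    nlinarith [hle]
  have hmain : ∫ v, f v * g v ∂μ ≤ ∫ v, f v * (⟪v, v - u⟫ / ‖v‖) ∂μ :=
    integral_mono hfg h2 hpt
  have hintf : 0 ≤ ∫ v, f v ∂μ := integral_nonneg hf0
  have hintg : 0 ≤ ∫ v, g v ∂μ := by
    have hnb : ‖u‖ ≤ ∫ v, ‖v‖ ∂μ := by
      rw [hu]
      exact norm_integral_le_integral_norm _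
    have : (∫ v, g v ∂μ) = (∫ v, ‖v‖ ∂μ) - ‖u‖ := by
      simp only [hgdef]
      rw [integral_sub h3 (integrable_const _), integral_const]
      simp [measure_univ]
    rw [this]
    linarith
  exact ⟨le_trans cheb hmain, mul_nonneg hintf hintg⟩
end
end
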